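/- The Mark 1 abstract machine is deterministic: for every machine state, at most one of the transition rules (Unwind1), (Unwind2), (Unwind3), (Lookup), (Letrec), (Subst), (Branch), (Seq), (Update), (Blackhole) is applicable, and the resulting successor state is unique. -/
import Mathlib


/-- Machine expressions: arguments of applications, arguments of constructor
applications and the second argument of seq are variables. -/
inductive MExpr : Type where
  | var : ℕ → MExpr
  | lam : ℕ → MExpr → MExpr
  | app : MExpr → ℕ → MExpr
  | seqE : MExpr → ℕ → MExpr
  | constr : ℕ → List ℕ → MExpr
  | letrec : List (ℕ × MExpr) → MExpr → MExpr
  | caseE : MExpr → List (ℕ × List ℕ × MExpr) → MExpr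
deriving Inhabited

/-- Rename a single variable occurrence `y` to `x`. -/
def rv (y x v : ℕ) : ℕ := if v = y then x else v

/-- Substitution of the variable `x` for the variable `y` in a machine
expression: `e.ren y x = e[x/y]`. -/
def MExpr.ren (y x : ℕ) : MExpr → MExpr
  | .var v => .var (rv y x v)
  | .lam z s => .lam z (s.ren y x)
  | .app s v => .app (s.ren y x) (rv y x v)
  | .seqE s v => .seqE (s.ren y x) (rv y x v)
  | .constr c vs => .constr c (vs.map (rv y x))
  | .letrec bs t => .letrec (bs.attach.map (fun b => (b.1.1, b.1.2.ren y x))) (t.ren y x)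
  | .caseE e alts =>
      .caseE (e.ren y x) (alts.attach.map (fun a => (a.1.1, a.1.2.1, a.1.2.2.ren y x)))
decreasing_by all_goals first
  | (simp <;> omega)
  | (have h1 := List.sizeOf_lt_of_mem b.2;
     obtain ⟨⟨a1, a2⟩, hm⟩ := b <;> simp_all <;> omega)
  | (have h1 := List.sizeOf_lt_of_mem a.2;
     obtain ⟨⟨a1, a2, a3⟩, hm⟩ := a <;> simp_all <;> omega)

/-- Parallel variable-for-variable substitution `t[x⃗/y⃗]` used by (Branch). -/
def substL (t : MExpr) (ys xs : List ℕ) : MExpr :=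
  (ys.zip xs).foldl (fun t p => t.ren p.1 p.2) t

/-- Mark 1 values: abstractions and constructor applications. -/
def MExpr.isValue : MExpr → Prop
  | .lam _ _ => True
  | .constr _ _ => True
  | _ => False

abbrev Heap := List (ℕ × MExpr)

/-- Stack entries of the Mark 1 machine. -/
inductive Frame : Type where
  | appF : ℕ → Frame
  | seqF : ℕ → Frame
  | caseF : List (ℕ × List ℕ × MExpr) → Frame
  | updF : ℕ → Frame

def Frame.ren (y x : ℕ) : Frame → Frame
  | .appF v => .appF (rv y x v)
  | .seqF v => .seqF (rv y x v)
  | .caseF alts => .caseF (alts.map (fun a => (a.1, a.2.1, a.2.2.ren y x)))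
  | .updF v => .updF (rv y x v)

def heapRen (y x : ℕ) (Γ : Heap) : Heap :=
  Γ.map (fun b => (rv y x b.1, b.2.ren y x))

def removeH (Γ : Heap) (x : ℕ) : Heap := Γ.eraseP (fun b => b.1 == x)

/-- The variables of the `#upd` entries of a stack. -/
def updVars (S : List Frame) : List ℕ :=
  S.filterMap (fun f => match f with | .updF x => some x | _ => none)

/-- Machine states `⟨Γ | s | S⟩`. -/
structure MState : Type where
  heap : Heap
  ctrl : MExpr
  stack : List Frame

/-- Selection of the (unique) matching case alternative. -/
def findAlt (alts : List (ℕ × List ℕ × MExpr)) (c : ℕ) : Option (List ℕ × MExpr) :=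
  (alts.find? (fun a => a.1 == c)).map (fun a => a.2)

/-- Names of the transition rules of the Mark 1 machine. -/
inductive Rule : Type where
  | unwind1 | unwind2 | unwind3 | lookup | letrecR | subst
  | branch | seqR | update | blackhole | screm
deriving DecidableEq

/-- Labeled transition relation of the Mark 1 machine (with the optional
rule (SCRem)).  The rule (Letrec) carries the usual freshness condition on
the newly introduced binders. -/
inductive Step : Rule → MState → MState → Prop where
  | unwind1 : ∀ Γ s x S, Step .unwind1 ⟨Γ, .app s x, S⟩ ⟨Γ, s, .appF x :: S⟩
  | unwind2 : ∀ Γ s x S, Step .unwind2 ⟨Γ, .seqE s x, S⟩ ⟨Γ, s, .seqF x :: S⟩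
  | unwind3 : ∀ Γ s alts S,
      Step .unwind3 ⟨Γ, .caseE s alts, S⟩ ⟨Γ, s, .caseF alts :: S⟩
  | lookup : ∀ Γ x s S, List.lookup x Γ = some s →
      Step .lookup ⟨Γ, .var x, S⟩ ⟨removeH Γ x, s, .updF x :: S⟩
  | letrecR : ∀ Γ bs t S,
      (∀ p ∈ bs, List.lookup p.1 Γ = none ∧ p.1 ∉ updVars S) →
      Step .letrecR ⟨Γ, .letrec bs t, S⟩ ⟨Γ ++ bs, t, S⟩
  | subst : ∀ Γ x s y S,
      Step .subst ⟨Γ, .lam x s, .appF y :: S⟩ ⟨Γ, s.ren x y, S⟩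
  | branch : ∀ Γ c xs alts ys t S, findAlt alts c = some (ys, t) →
      Step .branch ⟨Γ, .constr c xs, .caseF alts :: S⟩ ⟨Γ, substL t ys xs, S⟩
  | seqR : ∀ Γ v y S, v.isValue →
      Step .seqR ⟨Γ, v, .seqF y :: S⟩ ⟨Γ, .var y, S⟩
  | update : ∀ Γ v x S, v.isValue →
      Step .update ⟨Γ, v, .updF x :: S⟩ ⟨(x, v) :: Γ, v, S⟩
  | blackhole : ∀ Γ y S, List.lookup y Γ = none →
      Step .blackhole ⟨Γ, .var y, S⟩ ⟨Γ, .var y, S⟩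
  | screm : ∀ Γ s x y S,
      Step .screm ⟨Γ, s, .updF x :: .updF y :: S⟩
        ⟨heapRen y x Γ, s.ren y x, .updF x :: S.map (Frame.ren y x)⟩

/-- the Mark 1 abstract machine (rules (Unwind1), (Unwind2),
(Unwind3), (Lookup), (Letrec), (Subst), (Branch), (Seq), (Update),
(Blackhole), i.e. without the optional (SCRem)) is deterministic: for every
state at most one rule is applicable and the successor state is unique. -/
theorem mark1_deterministic :
    ∀ (q : MState) (r₁ r₂ : Rule) (q₁ q₂ : MState),
      r₁ ≠ Rule.screm → r₂ ≠ Rule.screm →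
      Step r₁ q q₁ → Step r₂ q q₂ → r₁ = r₂ ∧ q₁ = q₂ := by
  intro q r₁ r₂ q₁ q₂ h₁ h₂ s₁ s₂
  cases s₁ <;> cases s₂ <;> simp_all [MExpr.isValue]
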